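/- In a CFI-gadget of degree d, every inner vertex has exactly one neighbor in each of the d outer pairs, and the automorphisms of the gadget fixing the gadget setwise and preserving the colored partition correspond exactly to the even-weight vectors in F_2^d: each automorphism twists an even number of the d outer pairs. In particular, the color-preserving automorphism group of the gadget is isomorphic to the subgroup {x ∈ F_2^d : Σx = 0} of F_2^d, and is abelian of order 2^{d−1}. -/

import Mathlib

/-!
A color-preserving automorphism `φ` maps each outer pair `e` onto itself, by a bijection of
`F₂`, i.e. by `i ↦ i + y e`. Since adjacency is preserved and an inner vertex `x` is the one
adjacent to `(e, x e)` for all `e`, `φ` sends `x` to `x + y`; taking `x = 0` shows that `y` is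
itself an inner vertex, so has even weight. Conversely every even-weight `y` defines such a
twist, and twists commute. The inner vertices form the kernel of the surjection
`x ↦ ∑ x e` onto `F₂`, hence there are `2 ^ (d - 1)` of them.
-/

open SimpleGraph

/-- Inner vertices of the degree-`d` CFI-gadget: even-weight vectors of `F₂^d`. -/
abbrev InnerV (d : ℕ) := {x : Fin d → ZMod 2 // ∑ i, x i = 0}

/-- Vertices of the degree-`d` CFI-gadget. -/
abbrev GadgetV (d : ℕ) := InnerV d ⊕ (Fin d × ZMod 2)

/-- The degree-`d` CFI-gadget: inner vertex `x` is adjacent to outer vertex `(e, i)` iff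
`x e = i`. -/
def Gadget (d : ℕ) : SimpleGraph (GadgetV d) :=
  SimpleGraph.fromRel (fun a b =>
    match a, b with
    | Sum.inl x, Sum.inr (e, i) => x.val e = i
    | _, _ => False)

/-- The coloring of the gadget: the inner vertices form one color class and each outer
pair `{(e,0),(e,1)}` forms one color class. -/
def gadgetColor {d : ℕ} : GadgetV d → Option (Fin d)
  | Sum.inl _ => none
  | Sum.inr (e, _) => some e

namespace Gadget

variable {d : ℕ}

@[simp]
theorem adj_inl_inr (x : InnerV d) (e : Fin d) (i : ZMod 2) :
    (Gadget d).Adj (.inl x) (.inr (e, i)) ↔ x.val e = i := by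
  simp [Gadget, fromRel_adj]

@[simp]
theorem adj_inr_inl (x : InnerV d) (e : Fin d) (i : ZMod 2) :
    (Gadget d).Adj (.inr (e, i)) (.inl x) ↔ x.val e = i := by
  rw [adj_comm, adj_inl_inr]

@[simp]
theorem not_adj_inl_inl (x x' : InnerV d) : ¬(Gadget d).Adj (.inl x) (.inl x') := by
  simp [Gadget, fromRel_adj]

@[simp]
theorem not_adj_inr_inr (p q : Fin d × ZMod 2) : ¬(Gadget d).Adj (.inr p) (.inr q) := by
  simp [Gadget, fromRel_adj]

theorem existsUnique_adj_inr (x : InnerV d) (e : Fin d) :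
    ∃! i : ZMod 2, (Gadget d).Adj (.inl x) (.inr (e, i)) := by
  simp

def translate (y x : InnerV d) : InnerV d :=
  ⟨x.val + y.val, by simp [Finset.sum_add_distrib, x.prop, y.prop]⟩

@[simp]
theorem translate_val (y x : InnerV d) : (translate y x).val = x.val + y.val := rfl

theorem translate_translate (y x : InnerV d) : translate y (translate y x) = x :=
  Subtype.ext (by simp [add_assoc, ZModModule.add_self])

def twistFun (y : InnerV d) : GadgetV d → GadgetV d :=
  Sum.map (translate y) fun p => (p.1, p.2 + y.val p.1)

theorem twistFun_involutive (y : InnerV d) : Function.Involutive (twistFun y) := by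
  rintro (x | ⟨e, i⟩) <;> simp [twistFun, translate_translate, add_assoc, ZModModule.add_self]

def twist (y : InnerV d) : Gadget d ≃g Gadget d where
  toEquiv := (twistFun_involutive y).toPerm
  map_rel_iff' := by
    rintro (x | ⟨e, i⟩) (x' | ⟨e', i'⟩) <;> simp [twistFun]

theorem twist_inl (y x : InnerV d) : twist y (.inl x) = .inl (translate y x) := rfl

theorem twist_inr (y : InnerV d) (e : Fin d) (i : ZMod 2) :
    twist y (.inr (e, i)) = .inr (e, i + y.val e) := rfl

theorem twist_comm (y z : InnerV d) (a : GadgetV d) :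
    twist y (twist z a) = twist z (twist y a) := by
  rcases a with x | ⟨e, i⟩ <;> simp [twist_inl, twist_inr, translate, add_right_comm]

def PreservesColor (φ : Gadget d ≃g Gadget d) : Prop :=
  ∀ a, gadgetColor (φ a) = gadgetColor a

def IsTwistBy (φ : Gadget d ≃g Gadget d) (y : InnerV d) : Prop :=
  (∀ x : InnerV d, ∃ x' : InnerV d, φ (.inl x) = .inl x' ∧ x'.val = x.val + y.val) ∧
    ∀ (e : Fin d) (i : ZMod 2), φ (.inr (e, i)) = .inr (e, i + y.val e)

theorem twist_preservesColor (y : InnerV d) : PreservesColor (twist y) := by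
  rintro (x | ⟨e, i⟩) <;> rfl

theorem twist_isTwistBy (y : InnerV d) : IsTwistBy (twist y) y :=
  ⟨fun x => ⟨translate y x, rfl, rfl⟩, twist_inr y⟩

theorem IsTwistBy.eq_twist {φ : Gadget d ≃g Gadget d} {y : InnerV d} (h : IsTwistBy φ y) :
    φ = twist y := by
  ext (x | ⟨e, i⟩)
  · obtain ⟨x', hx, hx'⟩ := h.1 x
    rw [hx, twist_inl, show x' = translate y x from Subtype.ext hx']
  · exact h.2 e i

theorem IsTwistBy.unique {φ : Gadget d ≃g Gadget d} {y z : InnerV d} (hy : IsTwistBy φ y)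
    (hz : IsTwistBy φ z) : y = z := by
  ext e
  simpa using (hy.2 e 0).symm.trans (hz.2 e 0)

theorem PreservesColor.exists_map_inl {φ : Gadget d ≃g Gadget d} (hφ : PreservesColor φ)
    (x : InnerV d) : ∃ x', φ (.inl x) = .inl x' := by
  have h := hφ (.inl x)
  rcases hx : φ (.inl x) with x' | ⟨e, i⟩
  · exact ⟨x', rfl⟩
  · simp [hx, gadgetColor] at h

theorem PreservesColor.exists_map_inr {φ : Gadget d ≃g Gadget d} (hφ : PreservesColor φ)
    (e : Fin d) (i : ZMod 2) : ∃ j, φ (.inr (e, i)) = .inr (e, j) := by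
  have h := hφ (.inr (e, i))
  rcases hx : φ (.inr (e, i)) with x' | ⟨e', j⟩
  · simp [hx, gadgetColor] at h
  · simp only [hx, gadgetColor, Option.some.injEq] at h
    exact ⟨j, h ▸ rfl⟩

theorem coord_eq_iff_of_map {φ : Gadget d ≃g Gadget d} {x x' : InnerV d} {e : Fin d}
    {i j : ZMod 2} (hx : φ (.inl x) = .inl x') (he : φ (.inr (e, i)) = .inr (e, j)) :
    x.val e = i ↔ x'.val e = j := by
  rw [← adj_inl_inr, ← adj_inl_inr, ← hx, ← he, φ.map_adj_iff]

theorem _root_.ZMod.two_apply_eq_add_apply_zero {f : ZMod 2 → ZMod 2} (hf : f.Injective)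
    (i : ZMod 2) : f i = i + f 0 := by
  have key : ∀ a b : ZMod 2, a ≠ b → a = 1 + b := by decide
  rcases (by decide : ∀ a : ZMod 2, a = 0 ∨ a = 1) i with rfl | rfl
  · exact (zero_add _).symm
  · exact key _ _ (hf.ne (by decide))

theorem PreservesColor.exists_isTwistBy {φ : Gadget d ≃g Gadget d} (hφ : PreservesColor φ) :
    ∃ y, IsTwistBy φ y := by
  obtain ⟨y, hy⟩ := hφ.exists_map_inl ⟨0, by simp⟩
  choose σ hσ using hφ.exists_map_inr
  have hσ0 (e : Fin d) : σ e 0 = y.val e := ((coord_eq_iff_of_map hy (hσ e 0)).mp rfl).symm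
  have hσ_inj (e : Fin d) : (σ e).Injective := fun i j hij =>
    (Prod.ext_iff.mp (Sum.inr_injective (φ.injective ((hσ e i).trans (hij ▸ (hσ e j).symm))))).2
  have hinr (e : Fin d) (i : ZMod 2) : φ (.inr (e, i)) = .inr (e, i + y.val e) := by
    rw [hσ, ZMod.two_apply_eq_add_apply_zero (hσ_inj e), hσ0]
  refine ⟨y, fun x => ?_, hinr⟩
  obtain ⟨x', hx⟩ := hφ.exists_map_inl x
  exact ⟨x', hx, funext fun e => ((coord_eq_iff_of_map hx (hinr e (x.val e))).mp rfl)⟩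

end Gadget

def coordSum (d : ℕ) : (Fin d → ZMod 2) →+ ZMod 2 where
  toFun x := ∑ i, x i
  map_zero' := by simp
  map_add' x y := by simp [Finset.sum_add_distrib]

theorem coordSum_surjective {d : ℕ} (hd : 1 ≤ d) : Function.Surjective (coordSum d) :=
  fun a => ⟨Pi.single ⟨0, hd⟩ a, by simp [coordSum]⟩

theorem card_innerV {d : ℕ} (hd : 1 ≤ d) : Fintype.card (InnerV d) = 2 ^ (d - 1) := by
  have hker : (coordSum d).ker ≃ InnerV d := Equiv.subtypeEquivRight fun x => (coordSum d).mem_ker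
  have key := (coordSum d).ker.card_mul_index
  rw [AddSubgroup.index_ker, AddMonoidHom.range_eq_top.mpr (coordSum_surjective hd),
    AddSubgroup.card_top, Nat.card_congr hker] at key
  simp only [Nat.card_eq_fintype_card, ZMod.card, Fintype.card_pi, Finset.prod_const,
    Finset.card_univ, Fintype.card_fin, ← pow_sub_one_mul (by omega : d ≠ 0)] at key
  exact Nat.eq_of_mul_eq_mul_right two_pos key

/-- In the degree-`d` CFI-gadget: every inner vertex has exactly one neighbor in each of
the `d` outer pairs; the color-preserving automorphisms correspond exactly to the
even-weight vectors `y ∈ F₂^d`, acting by translation on the inner vertices and by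
flipping the outer pairs `e` with `y e = 1`; consequently the color-preserving
automorphism group is abelian of order `2^(d-1)`. -/
theorem stmt12 (d : ℕ) (hd : 1 ≤ d) :
    (∀ (x : InnerV d) (e : Fin d), ∃! i : ZMod 2,
        (Gadget d).Adj (Sum.inl x) (Sum.inr (e, i))) ∧
    (∀ φ : Gadget d ≃g Gadget d, (∀ a, gadgetColor (φ a) = gadgetColor a) →
      ∃! y : InnerV d,
        (∀ x : InnerV d, ∃ x' : InnerV d,
            φ (Sum.inl x) = Sum.inl x' ∧ x'.val = x.val + y.val) ∧
        (∀ (e : Fin d) (i : ZMod 2), φ (Sum.inr (e, i)) = Sum.inr (e, i + y.val e))) ∧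
    (∀ y : InnerV d, ∃ φ : Gadget d ≃g Gadget d,
        (∀ a, gadgetColor (φ a) = gadgetColor a) ∧
        (∀ x : InnerV d, ∃ x' : InnerV d,
            φ (Sum.inl x) = Sum.inl x' ∧ x'.val = x.val + y.val) ∧
        (∀ (e : Fin d) (i : ZMod 2), φ (Sum.inr (e, i)) = Sum.inr (e, i + y.val e))) ∧
    (∀ φ ψ : Gadget d ≃g Gadget d, (∀ a, gadgetColor (φ a) = gadgetColor a) →
        (∀ a, gadgetColor (ψ a) = gadgetColor a) → ∀ a, φ (ψ a) = ψ (φ a)) ∧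
    Fintype.card (InnerV d) = 2 ^ (d - 1) := by
  refine ⟨Gadget.existsUnique_adj_inr, fun φ hφ => ?_,
    fun y => ⟨Gadget.twist y, Gadget.twist_preservesColor y, Gadget.twist_isTwistBy y⟩,
    fun φ ψ hφ hψ a => ?_, card_innerV hd⟩
  · obtain ⟨y, hy⟩ := Gadget.PreservesColor.exists_isTwistBy hφ
    exact ⟨y, hy, fun z hz => Gadget.IsTwistBy.unique hz hy⟩
  · obtain ⟨y, hy⟩ := Gadget.PreservesColor.exists_isTwistBy hφ
    obtain ⟨z, hz⟩ := Gadget.PreservesColor.exists_isTwistBy hψ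
    rw [Gadget.IsTwistBy.eq_twist hy, Gadget.IsTwistBy.eq_twist hz]
    exact Gadget.twist_comm y z a
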